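/- Fix integers k ≥ 1 and m ≥ 1 and set n = m + k + 1. Let z ∈ ℝ^{m+k} be a column vector, let Z = (𝕀_{m+k} | z) be the (m+k) × n real matrix whose first m+k columns form the identity and whose last column is z (with columns Z₁, …, Z_n), and let Y be a k × (m+k) real matrix with rows Y₁, …, Y_k. Let A be the (k+1) × n real matrix whose first row is (−zᵀ, 1) and whose (α+1)-st row is (Y_α, 0) for α = 1, …, k. For j ∈ [n] let I_j = {j, j+1, …, j+k−1} (entries reduced modulo n to lie in [n]) and Ī_j = [n] \ I_j, and let A^{I_j} be the (k+1) × k submatrix of A on the columns indexed by I_j, taken in increasing order. Then for every j ∈ [n] and α ∈ [k] there exists a sign ε ∈ {+1, −1}, depending only on n, k, j, α and not on Y or z, such that for all Y and z: det(A^{I_j} with row α+1 deleted) = ε · det(the (m+k) × (m+k) matrix whose first k−1 columns are Y₁ᵀ, …, Y_kᵀ with Y_αᵀ omitted, followed by the columns Z_i for i ∈ Ī_j in increasing order). -/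
import Mathlib


/-- The index in `Fin k` of the `j`-th remaining row of `Y` after omitting row `α`. -/
def omitIdx {k : ℕ} (hk : 1 ≤ k) (α : Fin k) (j : Fin (k - 1)) : Fin k :=
  Fin.cast (by omega) ((Fin.cast (by omega : k = k - 1 + 1) α).succAbove j)

/-- The cyclic interval `I_j = {j, j+1, …, j+k-1}` (mod `n`) as a finset of `Fin n`. -/
def cyclicInterval {n : ℕ} [NeZero n] (k : ℕ) (hk : k ≤ n) (j : Fin n) :
    Finset (Fin n) :=
  Finset.image (fun t : Fin k => j + Fin.castLE hk t) Finset.univ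

theorem cyclicInterval_card {n : ℕ} [NeZero n] (k : ℕ) (hk : k ≤ n) (j : Fin n) :
    (cyclicInterval k hk j).card = k := by
  unfold cyclicInterval
  rw [Finset.card_image_of_injective _
      (fun a b hab => Fin.castLE_injective hk (add_left_cancel hab)),
    Finset.card_univ, Fintype.card_fin]

theorem cyclicInterval_compl_card {n : ℕ} [NeZero n] (k : ℕ) (hk : k ≤ n) (j : Fin n) :
    ((cyclicInterval k hk j)ᶜ).card = n - k := by
  rw [Finset.card_compl, cyclicInterval_card, Fintype.card_fin]

/-- The columns `Z₁, …, Z_n` of the matrix `Z = (𝕀_{m+k} | z)`: the first `m+k` columns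
are the standard basis vectors and the last column is `z`. -/
def Zcols {m k : ℕ} (z : Fin (m + k) → ℝ) : Fin (m + k + 1) → Fin (m + k) → ℝ :=
  Fin.snoc (fun j : Fin (m + k) => fun r : Fin (m + k) => if r = j then 1 else 0) z

/-- The `(k+1) × n` matrix `A` whose first row is `(−zᵀ, 1)` and whose `(α+1)`-st row is
`(Y_α, 0)`. -/
def Amat {m k : ℕ} (z : Fin (m + k) → ℝ) (Y : Matrix (Fin k) (Fin (m + k)) ℝ) :
    Matrix (Fin (k + 1)) (Fin (m + k + 1)) ℝ :=
  Matrix.of fun i : Fin (k + 1) =>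
    Fin.cases (Fin.snoc (fun t : Fin (m + k) => -z t) (1 : ℝ))
      (fun a : Fin k => Fin.snoc (Y a) (0 : ℝ)) i

lemma succAbove_val {n : ℕ} (p : Fin (n+1)) (i : Fin n) :
    (p.succAbove i).val = if i.val < p.val then i.val else i.val + 1 := by
  rw [Fin.succAbove]
  split_ifs with h h' h' <;>
    simp_all [Fin.lt_def, Fin.val_succ, Fin.coe_castSucc]

lemma omitIdx_val {k : ℕ} (hk : 1 ≤ k) (α : Fin k) (jj : Fin (k-1)) :
    (omitIdx hk α jj).val = if jj.val < α.val then jj.val else jj.val + 1 := by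
  simp [omitIdx, succAbove_val]

/-- Column reordering map. -/
def gmap (k m : ℕ) : Fin k ⊕ Fin (m + 1) → Fin (m + k + 1) :=
  Sum.elim
    (fun p => if p.val = 0 then Fin.last (m+k)
      else ⟨p.val - 1, by have := p.isLt; omega⟩)
    (fun q => ⟨k - 1 + q.val, by have := q.isLt; omega⟩)

lemma gmap_inl_zero (k m : ℕ) (p : Fin k) (hp : p.val = 0) :
    gmap k m (.inl p) = Fin.last (m+k) := by simp [gmap, hp]

lemma gmap_inl_pos (k m : ℕ) (p : Fin k) (hp : p.val ≠ 0) (h : p.val - 1 < m + k) :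
    gmap k m (.inl p) = Fin.castSucc ⟨p.val - 1, h⟩ := by
  simp only [gmap, Sum.elim_inl, if_neg hp]
  ext; simp

lemma gmap_inr (k m : ℕ) (q : Fin (m+1)) (h : k - 1 + q.val < m + k) :
    gmap k m (.inr q) = Fin.castSucc ⟨k - 1 + q.val, h⟩ := by
  simp only [gmap, Sum.elim_inr]
  ext; simp

lemma gmap_injective (k m : ℕ) (hk : 1 ≤ k) : Function.Injective (gmap k m) := by
  rintro (a|a) (b|b) h <;>
    simp only [gmap, Sum.elim_inl, Sum.elim_inr] at h <;>
    have h' := congrArg Fin.val h <;>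
    simp only [apply_ite Fin.val, Fin.val_last] at h' <;>
    have ha := a.isLt <;> have hb := b.isLt
  · split_ifs at h' <;> exact congrArg Sum.inl (Fin.ext (by omega))
  · split_ifs at h' <;> omega
  · split_ifs at h' <;> omega
  · exact congrArg Sum.inr (Fin.ext (by omega))

/-- Lemma 5.5: for the amplituhedron conjugate to a polytope (`n = m+k+1`), the maximal
minor of `A^{I_j}` obtained by deleting the row `α+1` equals, up to a sign `ε` depending
only on `n, k, j, α` (and not on `Y, z`), the determinant of the `(m+k) × (m+k)` matrix
whose first `k−1` columns are the rows `Y₁ᵀ, …, Y_kᵀ` of `Y` with `Y_αᵀ` omitted, followed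
by the columns `Z_i` of `Z` for `i ∈ Ī_j` in increasing order. (Here `α : Fin k` is the
`0`-indexed label of the `1`-indexed row `α+1` of the paper.) -/
theorem stmt_7 (k m : ℕ) (hk : 1 ≤ k) (hm : 1 ≤ m)
    (j : Fin (m + k + 1)) (α : Fin k) :
    ∃ ε : ℝ, (ε = 1 ∨ ε = -1) ∧
      ∀ (z : Fin (m + k) → ℝ) (Y : Matrix (Fin k) (Fin (m + k)) ℝ),
        (((Amat z Y).submatrix id
              ⇑((cyclicInterval k (by omega) j).orderEmbOfFin
                (cyclicInterval_card k (by omega) j))).submatrix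
            (Fin.succAbove α.succ) id).det =
          ε * (Matrix.of fun (r c : Fin (m + k)) =>
            Sum.elim (fun jj : Fin (k - 1) => Y (omitIdx hk α jj) r)
              (fun jj : Fin (m + 1) =>
                Zcols z
                  (((cyclicInterval k (by omega : k ≤ m + k + 1) j)ᶜ).orderEmbOfFin
                    (by rw [cyclicInterval_compl_card]; omega) jj) r)
              (finSumFinEquiv.symm
                (Fin.cast (by omega : m + k = k - 1 + (m + 1)) c))).det := by
  have hkn : k ≤ m + k + 1 := by omega
  have hsplit : m + k = k - 1 + (m + 1) := by omega
  have hcS : (cyclicInterval k hkn j).card = k := cyclicInterval_card k hkn j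
  have hcSc : ((cyclicInterval k hkn j)ᶜ).card = m + 1 := by
    rw [cyclicInterval_compl_card]; omega
  set f : Fin k → Fin (m+k+1) :=
    ⇑((cyclicInterval k hkn j).orderEmbOfFin hcS) with hfdef
  set g : Fin (m+1) → Fin (m+k+1) :=
    ⇑(((cyclicInterval k hkn j)ᶜ).orderEmbOfFin hcSc) with hgdef
  have hfS : ∀ p, f p ∈ cyclicInterval k hkn j := fun p =>
    Finset.orderEmbOfFin_mem _ hcS p
  have hgS : ∀ q, g q ∈ (cyclicInterval k hkn j)ᶜ := fun q =>
    Finset.orderEmbOfFin_mem _ hcSc q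
  have hfg : ∀ p q, f p ≠ g q := by
    intro p q h
    have h1 := hgS q
    rw [← h, Finset.mem_compl] at h1
    exact h1 (hfS p)
  have hfinj : Function.Injective f := ((cyclicInterval k hkn j).orderEmbOfFin hcS).injective
  have hginj : Function.Injective g :=
    (((cyclicInterval k hkn j)ᶜ).orderEmbOfFin hcSc).injective
  have hρinj : Function.Injective (Sum.elim f g) := by
    rintro (a|a) (b|b) h <;> simp only [Sum.elim_inl, Sum.elim_inr] at h
    · exact congrArg _ (hfinj h)
    · exact absurd h (hfg a b)
    · exact absurd h.symm (hfg b a)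
    · exact congrArg _ (hginj h)
  have hρb : Function.Bijective (Sum.elim f g) :=
    (Fintype.bijective_iff_injective_and_card _).2
      ⟨hρinj, by simp only [Fintype.card_sum, Fintype.card_fin]; omega⟩
  set ρ : Fin k ⊕ Fin (m+1) ≃ Fin (m+k+1) := Equiv.ofBijective _ hρb with hρdef
  have hγb : Function.Bijective (gmap k m) :=
    (Fintype.bijective_iff_injective_and_card _).2
      ⟨gmap_injective k m hk, by simp only [Fintype.card_sum, Fintype.card_fin]; omega⟩
  set γ : Fin k ⊕ Fin (m+1) ≃ Fin (m+k+1) := Equiv.ofBijective _ hγb with hγdef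
  set σ : Equiv.Perm (Fin k ⊕ Fin (m+1)) := ρ.trans γ.symm with hσdef
  refine ⟨((Equiv.Perm.sign σ : ℤ) : ℝ), by
    rcases Int.units_eq_one_or (Equiv.Perm.sign σ) with h | h <;> rw [h] <;> simp, ?_⟩
  intro z Y
  set W : Fin (m+k+1) → ℝ := Fin.snoc (fun t => -z t) 1 with hW
  set Zh : Matrix (Fin (m+k+1)) (Fin (m+k+1)) ℝ :=
    Matrix.of fun r c => (Fin.snoc (fun r' : Fin (m+k) => Zcols z c r') (W c) : Fin (m+k+1) → ℝ) r with hZh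
  set colA : Fin (m+k) → Fin (m+k+1) → ℝ := fun q =>
      Sum.elim (fun jj : Fin (k-1) => Fin.snoc (Y (omitIdx hk α jj)) (0:ℝ))
        (fun jj : Fin (m+1) => fun r => if r = g jj then (1:ℝ) else 0)
        (finSumFinEquiv.symm (Fin.cast hsplit q)) with hcolA
  set colfun : Fin (m+k+1) → Fin (m+k+1) → ℝ := Fin.snoc colA W with hcolfun
  set Kh : Matrix (Fin (m+k+1)) (Fin (m+k+1)) ℝ := Matrix.of fun r c => colfun c r with hKh
  set Rmat : Matrix (Fin (m+k)) (Fin (m+k)) ℝ := Matrix.of fun r c : Fin (m+k) =>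
      Sum.elim (fun jj : Fin (k-1) => Y (omitIdx hk α jj) r)
        (fun jj : Fin (m+1) => Zcols z (g jj) r)
        (finSumFinEquiv.symm (Fin.cast hsplit c)) with hRmat
  set Lmat : Matrix (Fin k) (Fin k) ℝ :=
    ((Amat z Y).submatrix id f).submatrix (Fin.succAbove α.succ) id with hLmat
  -- entry evaluation lemmas
  have hZh1 : ∀ (r' : Fin (m+k)) c, Zh (Fin.castSucc r') c = Zcols z c r' := by
    intro r' c; simp [hZh]
  have hZh2 : ∀ c, Zh (Fin.last (m+k)) c = W c := by
    intro c; simp [hZh]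
  have hKh1 : ∀ r (q' : Fin (m+k)), Kh r (Fin.castSucc q') = colA q' r := by
    intro r q'; simp [hKh, hcolfun]
  have hKh2 : ∀ r, Kh r (Fin.last (m+k)) = W r := by
    intro r; simp [hKh, hcolfun]
  have hAmat_zero : ∀ c, Amat z Y 0 c = W c := by
    intro c; simp [Amat, hW]
  have hAmat_succ : ∀ (a : Fin k) c, Amat z Y (Fin.succ a) c = (Fin.snoc (Y a) 0 : Fin (m+k+1) → ℝ) c := by
    intro a c; simp [Amat]
  -- the basic sum against a Z-row
  have sum_indicator : ∀ (r' : Fin (m+k)) (v : Fin (m+k+1) → ℝ),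
      ∑ t, Zcols z t r' * v t = v (Fin.castSucc r') + z r' * v (Fin.last (m+k)) := by
    intro r' v
    rw [Fin.sum_univ_castSucc]
    simp [Zcols, ite_mul]
  have hZKrow : ∀ (r' : Fin (m+k)) (c : Fin (m+k+1)),
      (Zh * Kh) (Fin.castSucc r') c
        = colfun c (Fin.castSucc r') + z r' * colfun c (Fin.last (m+k)) := by
    intro r' c
    simp only [Matrix.mul_apply, hKh, Matrix.of_apply]
    simp only [hZh1]
    exact sum_indicator r' (colfun c)
  have hcolzero : ∀ r' : Fin (m+k), (Zh*Kh) (Fin.castSucc r') (Fin.last (m+k)) = 0 := by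
    intro r'
    rw [hZKrow]
    simp [hcolfun, hW]
  have hblock : ∀ r' q' : Fin (m+k),
      (Zh*Kh) (Fin.castSucc r') (Fin.castSucc q') = Rmat r' q' := by
    intro r' q'
    rw [hZKrow]
    simp only [hcolfun, Fin.snoc_castSucc, hcolA, hRmat, Matrix.of_apply]
    rcases h : finSumFinEquiv.symm (Fin.cast hsplit q') with jj | jj
    · simp
    · simp only [Sum.elim_inr]
      rcases Fin.eq_castSucc_or_eq_last (g jj) with ⟨u, hu⟩ | hu <;> rw [hu] <;>
        simp [Zcols, Fin.castSucc_inj, (Fin.castSucc_lt_last _).ne, (Fin.castSucc_lt_last _).ne']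
  have hlastlast : (Zh * Kh) (Fin.last (m+k)) (Fin.last (m+k)) = 1 + ∑ t, z t * z t := by
    have h0 : (Zh*Kh) (Fin.last (m+k)) (Fin.last (m+k)) = ∑ t, W t * W t := by
      simp only [Matrix.mul_apply, hZh2, hKh2]
    rw [h0, Fin.sum_univ_castSucc]
    simp only [hW, Fin.snoc_castSucc, Fin.snoc_last, neg_mul_neg, mul_one]
    rw [add_comm]
  -- determinant of the product
  have hdet2 : (Zh * Kh).det = (1 + ∑ t, z t * z t) * Rmat.det := by
    rw [Matrix.det_succ_column (Zh*Kh) (Fin.last (m+k))]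
    rw [Fintype.sum_eq_single (Fin.last (m+k))]
    · rw [hlastlast, Fin.succAbove_last]
      have h1 : ((Zh*Kh).submatrix Fin.castSucc Fin.castSucc) = Rmat := by
        ext r q; exact hblock r q
      rw [h1]
      have h2 : (-1:ℝ) ^ ((Fin.last (m+k) : ℕ) + (Fin.last (m+k) : ℕ)) = 1 := by
        rw [Fin.val_last]; exact Even.neg_one_pow ⟨m+k, by ring⟩
      rw [h2, one_mul]
    · intro i hi
      obtain ⟨r', rfl⟩ := Fin.exists_castSucc_eq.mpr hi
      rw [hcolzero]; ring
  -- determinant of Zh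
  have hdetZ : Zh.det = 1 + ∑ t, z t * z t := by
    rw [← Matrix.det_submatrix_equiv_self finSumFinEquiv Zh]
    have hca : ∀ i : Fin (m+k), Fin.castAdd 1 i = Fin.castSucc i := fun _ => rfl
    have hna : ∀ i : Fin 1, Fin.natAdd (m+k) i = Fin.last (m+k) := by
      intro i; have h1 := i.isLt; ext; simp only [Fin.coe_natAdd, Fin.val_last]; omega
    have hb : Zh.submatrix ⇑finSumFinEquiv ⇑finSumFinEquiv =
        Matrix.fromBlocks 1 (Matrix.of fun r' (_ : Fin 1) => z r')
          (Matrix.of fun (_ : Fin 1) t => -z t) (Matrix.of fun _ _ => (1:ℝ)) := by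
      ext i c
      rcases i with i | i <;> rcases c with c | c <;>
        simp only [Matrix.submatrix_apply, finSumFinEquiv_apply_left,
          finSumFinEquiv_apply_right, hca, hna, Matrix.fromBlocks_apply₁₁,
          Matrix.fromBlocks_apply₁₂, Matrix.fromBlocks_apply₂₁, Matrix.fromBlocks_apply₂₂,
          hZh1, hZh2, Matrix.of_apply]
      all_goals simp [Zcols, Matrix.one_apply, hW]
    rw [hb, Matrix.det_fromBlocks_one₁₁, Matrix.det_fin_one]
    simp [Matrix.mul_apply, Matrix.sub_apply, Finset.sum_neg_distrib]
  -- the block decomposition of Kh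
  have hKsub : Kh.submatrix ⇑ρ ⇑γ =
      Matrix.fromBlocks Lmat.transpose 0
        (Matrix.of fun q p => Kh (g q) (gmap k m (Sum.inl p))) 1 := by
    ext i c
    rcases i with i | i <;> rcases c with c | c
    · -- top-left
      simp only [Matrix.submatrix_apply, Matrix.fromBlocks_apply₁₁, Matrix.transpose_apply]
      show Kh (f i) (gmap k m (Sum.inl c)) = Lmat c i
      by_cases hc : c.val = 0
      · rw [gmap_inl_zero k m c hc, hKh2]
        have hcc : (α.succ).succAbove c = 0 := by
          ext; rw [succAbove_val]; simp [hc]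
        rw [hLmat]
        simp only [Matrix.submatrix_apply, id, hcc]
        rw [hAmat_zero]
      · have hlt : c.val - 1 < m + k := by have := c.isLt; omega
        rw [gmap_inl_pos k m c hc hlt, hKh1]
        have hcast : Fin.cast hsplit (⟨c.val - 1, hlt⟩ : Fin (m+k))
            = Fin.castAdd (m+1) (⟨c.val - 1, by have := c.isLt; omega⟩ : Fin (k-1)) := by
          ext; rfl
        simp only [hcolA, hcast, finSumFinEquiv_symm_apply_castAdd, Sum.elim_inl]
        rw [hLmat]
        simp only [Matrix.submatrix_apply, id]
        have hv1 : 1 ≤ ((α.succ).succAbove c).val := by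
          rw [succAbove_val]; split <;> omega
        have hv2 : ((α.succ).succAbove c).val - 1 < k := by
          have := ((α.succ).succAbove c).isLt; omega
        have hwsucc : (α.succ).succAbove c
            = Fin.succ ⟨((α.succ).succAbove c).val - 1, hv2⟩ := by
          ext; simp [Fin.val_succ]; omega
        rw [hwsucc, hAmat_succ]
        have homit : omitIdx hk α ⟨c.val - 1, by have := c.isLt; omega⟩
            = ⟨((α.succ).succAbove c).val - 1, hv2⟩ := by
          ext
          rw [omitIdx_val]
          show (if c.val - 1 < α.val then c.val - 1 else c.val - 1 + 1)
            = (α.succ.succAbove c).val - 1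
          have hs := succAbove_val α.succ c
          simp only [Fin.val_succ] at hs
          have hα := α.isLt
          rw [hs]
          split_ifs <;> omega
        rw [homit]
    · -- top-right
      simp only [Matrix.submatrix_apply, Matrix.fromBlocks_apply₁₂, Matrix.zero_apply]
      show Kh (f i) (gmap k m (Sum.inr c)) = 0
      have hlt : k - 1 + c.val < m + k := by have := c.isLt; omega
      rw [gmap_inr k m c hlt, hKh1]
      have hcast : Fin.cast hsplit (⟨k - 1 + c.val, hlt⟩ : Fin (m+k))
          = Fin.natAdd (k-1) c := by ext; rfl
      simp only [hcolA, hcast, finSumFinEquiv_symm_apply_natAdd, Sum.elim_inr]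
      simp [hfg i c]
    · -- bottom-left
      simp only [Matrix.submatrix_apply, Matrix.fromBlocks_apply₂₁, Matrix.of_apply]
      rfl
    · -- bottom-right
      simp only [Matrix.submatrix_apply, Matrix.fromBlocks_apply₂₂]
      show Kh (g i) (gmap k m (Sum.inr c)) = (1 : Matrix (Fin (m+1)) (Fin (m+1)) ℝ) i c
      have hlt : k - 1 + c.val < m + k := by have := c.isLt; omega
      rw [gmap_inr k m c hlt, hKh1]
      have hcast : Fin.cast hsplit (⟨k - 1 + c.val, hlt⟩ : Fin (m+k))
          = Fin.natAdd (k-1) c := by ext; rfl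
      simp only [hcolA, hcast, finSumFinEquiv_symm_apply_natAdd, Sum.elim_inr]
      simp [Matrix.one_apply, hginj.eq_iff]
  have hdetKsub : (Kh.submatrix ⇑ρ ⇑γ).det = Lmat.det := by
    rw [hKsub, Matrix.det_fromBlocks_zero₁₂, Matrix.det_transpose, Matrix.det_one, mul_one]
  have hperm : Kh.submatrix ⇑ρ ⇑γ = (Kh.submatrix ⇑γ ⇑γ).submatrix ⇑σ id := by
    ext i c
    simp only [Matrix.submatrix_apply, id_eq, hσdef, Equiv.trans_apply,
      Equiv.apply_symm_apply]
  have hsign : Lmat.det = ((Equiv.Perm.sign σ : ℤ) : ℝ) * Kh.det := by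
    rw [← hdetKsub, hperm, Matrix.det_permute, Matrix.det_submatrix_equiv_self]
  have hpos : (1 + ∑ t, z t * z t) ≠ 0 := by
    have h1 : (0:ℝ) ≤ ∑ t, z t * z t :=
      Finset.sum_nonneg fun t _ => mul_self_nonneg (z t)
    intro h0; linarith
  have hmulKZ : (1 + ∑ t, z t * z t) * Kh.det = (1 + ∑ t, z t * z t) * Rmat.det := by
    rw [← hdetZ, ← Matrix.det_mul, hdet2, hdetZ]
  have hKR : Kh.det = Rmat.det := mul_left_cancel₀ hpos hmulKZ
  show Lmat.det = ((Equiv.Perm.sign σ : ℤ) : ℝ) * Rmat.det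
  rw [hsign, hKR]
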